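/- arXiv:2104.05265 — 2 statements merged into one kernel-verified Lean document; each statement's English description precedes it below -/
import Mathlib

section
/- Let G be a group, s ∈ G an involution, and t_1,...,t_w ∈ G satisfying s t_j s^{-1} = t_j^{-1}. With r_j defined by r_1 = t_1 and r_{j+1} = (t_1···t_j) t_{j+1} (t_1···t_j)^{-1}, the elements s_j := r_j^2 r_{j-1}^2 ··· r_1^2 · s satisfy s_j^2 = 1 for every j, and moreover s_j r_{j+1} s_j^{-1} = r_{j+1}^{-1} (recursive invariance). -/
/-- Recursive invariance: with `r 0 = t 0`, `r (j+1) = (t 0 ⋯ t j) * t (j+1) * (t 0 ⋯ t j)⁻¹`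
and `sj j = (r (j-1))^2 * ⋯ * (r 0)^2 * s`, each `sj j` is an involution, and `sj j`
conjugates `r j` to its inverse. -/
theorem recursive_invariance (G : Type*) [Group G] (s : G) (hs : s ^ 2 = 1)
    (t : ℕ → G) (ht : ∀ j, s * t j * s⁻¹ = (t j)⁻¹)
    (r : ℕ → G)
    (hr : ∀ j, r j = ((List.range j).map t).prod * t j * (((List.range j).map t).prod)⁻¹)
    (sj : ℕ → G)
    (hsj : ∀ j, sj j = (((List.range j).map (fun i => (r i) ^ 2)).reverse).prod * s) :
    ∀ j, (sj j) ^ 2 = 1 ∧ sj j * r j * (sj j)⁻¹ = (r j)⁻¹ := by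
  have hss : s * s = 1 := by rw [← sq]; exact hs
  have hsinv : s⁻¹ = s := inv_eq_of_mul_eq_one_right hss
  -- t j * s = s * (t j)⁻¹
  have hts : ∀ j, t j * s = s * (t j)⁻¹ := by
    intro j
    have h := ht j
    rw [hsinv] at h
    calc t j * s = (s * s) * (t j * s) := by rw [hss, one_mul]
      _ = s * (s * t j * s) := by group
      _ = s * (t j)⁻¹ := by rw [h]
  set P : ℕ → G := fun j => ((List.range j).map t).prod with hP
  have hPsucc : ∀ j, P (j + 1) = P j * t j := by
    intro j
    simp [hP, List.range_succ]
  have key : ∀ j, sj j = P j * s * (P j)⁻¹ := by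
    intro j
    induction j with
    | zero => simp [hsj, hP]
    | succ n ih =>
      have hrev : (((List.range (n+1)).map (fun i => (r i) ^ 2)).reverse).prod
          = (r n) ^ 2 * (((List.range n).map (fun i => (r i) ^ 2)).reverse).prod := by
        simp [List.range_succ]
      have hsjn : (((List.range n).map (fun i => (r i) ^ 2)).reverse).prod = sj n * s⁻¹ := by
        rw [hsj n]; group
      rw [hsj (n+1), hrev, hsjn, ih, hr n, hPsucc n, sq]
      calc P n * t n * (P n)⁻¹ * (P n * t n * (P n)⁻¹) * (P n * s * (P n)⁻¹ * s⁻¹) * s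
          = P n * (t n * (t n * s)) * (P n)⁻¹ := by group
        _ = P n * (t n * (s * (t n)⁻¹)) * (P n)⁻¹ := by rw [hts n]
        _ = P n * t n * s * (P n * t n)⁻¹ := by group
  intro j
  rw [key j, hr j]
  constructor
  · rw [sq]
    calc P j * s * (P j)⁻¹ * (P j * s * (P j)⁻¹) = P j * (s * s) * (P j)⁻¹ := by group
      _ = 1 := by rw [hss]; group
  · have h := ht j
    calc P j * s * (P j)⁻¹ * (P j * t j * (P j)⁻¹) * (P j * s * (P j)⁻¹)⁻¹
        = P j * (s * t j * s⁻¹) * (P j)⁻¹ := by group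
      _ = P j * (t j)⁻¹ * (P j)⁻¹ := by rw [h]
      _ = (P j * t j * (P j)⁻¹)⁻¹ := by group
end

section
/- Let p > q > 0 with gcd(p,q) = 1 and suppose q^2 ≡ 1 (mod p). Write the continued fraction expansion p/q = [r_1, r_2, ..., r_n] = r_1 - 1/(r_2 - 1/(··· - 1/r_n)) with all r_i ≥ 2. Then the expansion is a palindrome: r_i = r_{n-i+1} for all 1 ≤ i ≤ n. -/
/-!
Encode `[r₁,…,rₙ]` by `P = M(r₁) ⋯ M(rₙ)` (`prodMatrix`), where `M(r) = !![r, -1; 1, 0]`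
(`stepMatrix`). The expansion equals `P₀₀ / P₁₀`, and `det P = 1` makes this fraction reduced,
so `(p, q) = (P₀₀, P₁₀)`. Transposing `P` reverses the product up to conjugation by
`diag(1, -1)` (`signDiag`), so the reversed expansion equals `p / q'` with `q' = -P₀₁`, and
the determinant gives `q q' ≡ 1 (mod p)`. Since also `q² ≡ 1 (mod p)` and both `q` and `q'`
lie in `(0, p)`, `q' = q`. Finally, two expansions with entries `≥ 2` and the same value
coincide, because the first entry is the ceiling of the value.
-/

/-- Negative (Hirzebruch–Jung) continued fraction: `negCF [r₁,…,rₙ] = r₁ - 1/(r₂ - 1/(⋯ - 1/rₙ))`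
(with the convention `1/0 = 0` in `ℚ`, so `negCF [r] = r`). -/
def negCF : List ℤ → ℚ
  | [] => 0
  | r :: l => (r : ℚ) - 1 / negCF l

open Matrix

namespace HirzebruchJung

def stepMatrix (r : ℤ) : Matrix (Fin 2) (Fin 2) ℤ := !![r, -1; 1, 0]

def prodMatrix (l : List ℤ) : Matrix (Fin 2) (Fin 2) ℤ := (l.map stepMatrix).prod

def signDiag : Matrix (Fin 2) (Fin 2) ℤ := !![1, 0; 0, -1]

@[simp]
lemma prodMatrix_nil : prodMatrix [] = 1 := rfl

lemma prodMatrix_cons (r : ℤ) (l : List ℤ) :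
    prodMatrix (r :: l) = stepMatrix r * prodMatrix l := by
  simp [prodMatrix]

lemma prodMatrix_append (l₁ l₂ : List ℤ) :
    prodMatrix (l₁ ++ l₂) = prodMatrix l₁ * prodMatrix l₂ := by
  simp [prodMatrix]

lemma stepMatrix_mul (r : ℤ) (P : Matrix (Fin 2) (Fin 2) ℤ) :
    stepMatrix r * P = !![r * P 0 0 - P 1 0, r * P 0 1 - P 1 1; P 0 0, P 0 1] := by
  rw [stepMatrix, eta_fin_two P]
  simp [sub_eq_add_neg]

@[simp]
lemma prodMatrix_cons_apply (r : ℤ) (l : List ℤ) (i j : Fin 2) :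
    prodMatrix (r :: l) i j =
      !![r * prodMatrix l 0 0 - prodMatrix l 1 0, r * prodMatrix l 0 1 - prodMatrix l 1 1;
        prodMatrix l 0 0, prodMatrix l 0 1] i j := by
  rw [prodMatrix_cons, stepMatrix_mul]

lemma signDiag_mul_mul_signDiag (P : Matrix (Fin 2) (Fin 2) ℤ) :
    signDiag * P * signDiag = !![P 0 0, -P 0 1; -P 1 0, P 1 1] := by
  rw [signDiag, eta_fin_two P]
  simp

lemma signDiag_mul_signDiag : signDiag * signDiag = 1 := by
  simp [signDiag, one_fin_two]

lemma det_prodMatrix (l : List ℤ) : (prodMatrix l).det = 1 := by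
  induction l with
  | nil => simp
  | cons r l ih => rw [prodMatrix_cons, det_mul, ih, stepMatrix, det_fin_two_of]; ring

lemma transpose_stepMatrix (r : ℤ) :
    (stepMatrix r)ᵀ = signDiag * stepMatrix r * signDiag := by
  rw [signDiag_mul_mul_signDiag, stepMatrix]
  ext i j
  fin_cases i <;> fin_cases j <;> rfl

lemma prodMatrix_reverse (l : List ℤ) :
    prodMatrix l.reverse = signDiag * (prodMatrix l)ᵀ * signDiag := by
  induction l with
  | nil => simp [signDiag_mul_signDiag]
  | cons r l ih =>
    rw [List.reverse_cons, prodMatrix_append, ih, prodMatrix_cons r l, transpose_mul,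
      prodMatrix_cons r [], prodMatrix_nil, transpose_stepMatrix]
    simp only [Matrix.mul_assoc, signDiag_mul_signDiag, Matrix.mul_one]

@[simp]
lemma prodMatrix_reverse_zero_zero (l : List ℤ) :
    prodMatrix l.reverse 0 0 = prodMatrix l 0 0 := by
  simp [prodMatrix_reverse, signDiag_mul_mul_signDiag]

@[simp]
lemma prodMatrix_reverse_one_zero (l : List ℤ) :
    prodMatrix l.reverse 1 0 = -prodMatrix l 0 1 := by
  simp [prodMatrix_reverse, signDiag_mul_mul_signDiag]

lemma isCoprime_prodMatrix_zero_zero_one_zero (l : List ℤ) :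
    IsCoprime (prodMatrix l 0 0) (prodMatrix l 1 0) :=
  ⟨prodMatrix l 1 1, -prodMatrix l 0 1, by
    linear_combination (det_fin_two (prodMatrix l)).symm.trans (det_prodMatrix l)⟩

lemma mul_neg_prodMatrix_zero_one_modEq_one (l : List ℤ) :
    prodMatrix l 1 0 * -prodMatrix l 0 1 ≡ 1 [ZMOD prodMatrix l 0 0] :=
  (Int.modEq_iff_dvd.mpr ⟨-prodMatrix l 1 1, by
    linear_combination (det_fin_two (prodMatrix l)).symm.trans (det_prodMatrix l)⟩).symm

variable {l : List ℤ}

lemma prodMatrix_one_zero_nonneg_lt (hl : ∀ x ∈ l, 2 ≤ x) :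
    0 ≤ prodMatrix l 1 0 ∧ prodMatrix l 1 0 < prodMatrix l 0 0 := by
  induction l with
  | nil => simp
  | cons r l ih =>
    obtain ⟨hr, hl⟩ := List.forall_mem_cons.mp hl
    obtain ⟨hc, hca⟩ := ih hl
    simp only [prodMatrix_cons_apply, of_apply, cons_val', cons_val_zero, cons_val_one,
      empty_val', cons_val_fin_one]
    constructor <;> nlinarith

lemma prodMatrix_one_zero_pos (hl : ∀ x ∈ l, 2 ≤ x) (hne : l ≠ []) :
    0 < prodMatrix l 1 0 := by
  obtain ⟨r, t, rfl⟩ := List.exists_cons_of_ne_nil hne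
  have := prodMatrix_one_zero_nonneg_lt (List.forall_mem_cons.mp hl).2
  simpa using by omega

/-- The junk value `1 / 0 = 0` makes this hold for `l = []` as well. -/
lemma negCF_eq_div (hl : ∀ x ∈ l, 2 ≤ x) :
    negCF l = (prodMatrix l 0 0 : ℚ) / prodMatrix l 1 0 := by
  induction l with
  | nil => simp [negCF]
  | cons r l ih =>
    have hl := (List.forall_mem_cons.mp hl).2
    have ha : (prodMatrix l 0 0 : ℚ) ≠ 0 := by
      have := prodMatrix_one_zero_nonneg_lt hl
      exact_mod_cast (by omega : prodMatrix l 0 0 ≠ 0)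
    rw [negCF, ih hl, prodMatrix_cons_apply, prodMatrix_cons_apply]
    simp only [of_apply, cons_val', cons_val_zero, cons_val_one, empty_val', cons_val_fin_one,
      Int.cast_sub, Int.cast_mul]
    field_simp

lemma one_lt_negCF (hl : ∀ x ∈ l, 2 ≤ x) (hne : l ≠ []) : 1 < negCF l := by
  have hc := prodMatrix_one_zero_pos hl hne
  have hca := (prodMatrix_one_zero_nonneg_lt hl).2
  rw [negCF_eq_div hl, one_lt_div (by exact_mod_cast hc)]
  exact_mod_cast hca

lemma ceil_negCF_cons {r : ℤ} (hl : ∀ x ∈ r :: l, 2 ≤ x) : ⌈negCF (r :: l)⌉ = r := by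
  have hinv : 0 ≤ 1 / negCF l ∧ 1 / negCF l < 1 := by
    rcases eq_or_ne l [] with rfl | hne
    · simp [negCF]
    · have := one_lt_negCF (List.forall_mem_cons.mp hl).2 hne
      exact ⟨by positivity, (div_lt_one (by linarith)).2 this⟩
  rw [negCF, Int.ceil_eq_iff]
  constructor <;> linarith

lemma eq_of_negCF_eq {l₁ l₂ : List ℤ} (h₁ : ∀ x ∈ l₁, 2 ≤ x) (h₂ : ∀ x ∈ l₂, 2 ≤ x)
    (h : negCF l₁ = negCF l₂) : l₁ = l₂ := by
  induction l₁ generalizing l₂ with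
  | nil =>
    cases l₂ with
    | nil => rfl
    | cons s u => linarith [one_lt_negCF h₂ (List.cons_ne_nil s u), show negCF [] = 0 from rfl]
  | cons r t ih =>
    cases l₂ with
    | nil => linarith [one_lt_negCF h₁ (List.cons_ne_nil r t), show negCF [] = 0 from rfl]
    | cons s u =>
      have hrs : r = s := by rw [← ceil_negCF_cons h₁, h, ceil_negCF_cons h₂]
      subst hrs
      have htu : negCF t = negCF u := by
        simpa [negCF] using h
      rw [ih (List.forall_mem_cons.mp h₁).2 (List.forall_mem_cons.mp h₂).2 htu]

lemma negCF_reverse (hl : ∀ x ∈ l, 2 ≤ x) :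
    negCF l.reverse = (prodMatrix l 0 0 : ℚ) / (-prodMatrix l 0 1 : ℤ) := by
  rw [negCF_eq_div fun x hx => hl x (List.mem_reverse.mp hx), prodMatrix_reverse_zero_zero,
    prodMatrix_reverse_one_zero]

end HirzebruchJung

lemma Int.eq_of_mul_modEq_one_of_sq_modEq_one {p q q' : ℤ} (hsq : q ^ 2 ≡ 1 [ZMOD p])
    (hmul : q * q' ≡ 1 [ZMOD p]) (hq : 0 ≤ q) (hqp : q < p) (hq' : 0 ≤ q') (hq'p : q' < p) :
    q' = q := by
  have h : q' ≡ q [ZMOD p] := calc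
    q' = q' * 1 := (mul_one q').symm
    _ ≡ q' * q ^ 2 [ZMOD p] := hsq.symm.mul_left q'
    _ = (q * q') * q := by ring
    _ ≡ 1 * q [ZMOD p] := hmul.mul_right q
    _ = q := one_mul q
  rwa [Int.ModEq, Int.emod_eq_of_lt hq' hq'p, Int.emod_eq_of_lt hq hqp] at h

open HirzebruchJung in
/-- If `p > q > 0` are coprime with `q^2 ≡ 1 (mod p)`, then the negative continued
fraction expansion `p/q = [r₁,…,rₙ]` with all `rᵢ ≥ 2` is a palindrome. -/
theorem hj_palindrome (p q : ℤ) (hpq : p > q) (hq : q > 0) (hcop : IsCoprime p q)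
    (hsq : q ^ 2 ≡ 1 [ZMOD p]) (l : List ℤ) (hl : ∀ x ∈ l, 2 ≤ x)
    (hcf : (p : ℚ) / (q : ℚ) = negCF l) :
    l.reverse = l := by
  have hne : l ≠ [] := by
    rintro rfl
    exact (div_pos (by exact_mod_cast hq.trans hpq) (by exact_mod_cast hq)).ne' hcf
  obtain ⟨rfl, rfl⟩ : p = prodMatrix l 0 0 ∧ q = prodMatrix l 1 0 :=
    Rat.div_int_inj hq (prodMatrix_one_zero_pos hl hne) (Int.isCoprime_iff_gcd_eq_one.mp hcop)
      (Int.isCoprime_iff_gcd_eq_one.mp (isCoprime_prodMatrix_zero_zero_one_zero l))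
      (hcf.trans (negCF_eq_div hl))
  have hrl : ∀ x ∈ l.reverse, 2 ≤ x := fun x hx => hl x (List.mem_reverse.mp hx)
  have hpos := prodMatrix_one_zero_pos hrl (List.reverse_ne_nil_iff.mpr hne)
  have hlt := (prodMatrix_one_zero_nonneg_lt hrl).2
  simp only [prodMatrix_reverse_one_zero, prodMatrix_reverse_zero_zero] at hpos hlt
  have hq' : -prodMatrix l 0 1 = prodMatrix l 1 0 :=
    Int.eq_of_mul_modEq_one_of_sq_modEq_one hsq (mul_neg_prodMatrix_zero_one_modEq_one l)
      hq.le hpq hpos.le hlt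
  refine eq_of_negCF_eq hrl hl ?_
  rw [negCF_reverse hl, hq', negCF_eq_div hl]
end
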